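/- Let W ∈ ℝ^{n×n} be symmetric with nonnegative entries and positive row sums, D the diagonal matrix of row sums, S = D^{-1/2} W D^{-1/2}, μ > 0, and α = 1/(1+μ). Consider the objective J(F) = (1/2) Σ_{i,j=1}^n W_{ij} ‖F_{i*}/√D_{ii} - F_{j*}/√D_{jj}‖₂² + μ‖F - I‖_F² on ℝ^{n×n}, where F_{i*} denotes the i-th row of F and I the n×n identity. Then I - αS is invertible and F* = (1-α)(I - αS)^{-1} is the unique global minimizer of J. -/

import Mathlib

open Matrix Finset

/-- The symmetrically normalized matrix `S = D^{-1/2} W D^{-1/2}`. -/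
noncomputable def normMat (n : ℕ) (W : Matrix (Fin n) (Fin n) ℝ) :
    Matrix (Fin n) (Fin n) ℝ :=
  (Matrix.diagonal fun i => (Real.sqrt (∑ j, W i j))⁻¹) * W *
    (Matrix.diagonal fun i => (Real.sqrt (∑ j, W i j))⁻¹)

/-- The basic diffusion objective
`J(F) = (1/2) Σ_{i,j} W_ij ‖F_i/√Dii - F_j/√Djj‖₂² + μ‖F - I‖_F²`. -/
noncomputable def basicObj (n : ℕ) (W : Matrix (Fin n) (Fin n) ℝ) (μ : ℝ)
    (F : Matrix (Fin n) (Fin n) ℝ) : ℝ :=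
  (1 / 2 : ℝ) * ∑ i, ∑ j, W i j *
      ∑ l, (F i l / Real.sqrt (∑ j', W i j') - F j l / Real.sqrt (∑ j', W j j')) ^ 2 +
    μ * ∑ i, ∑ j, (F i j - (1 : Matrix (Fin n) (Fin n) ℝ) i j) ^ 2

lemma normMat_apply (n : ℕ) (W : Matrix (Fin n) (Fin n) ℝ) (i j : Fin n) :
    normMat n W i j = (Real.sqrt (∑ k, W i k))⁻¹ * W i j * (Real.sqrt (∑ k, W j k))⁻¹ := by
  simp [normMat, Matrix.mul_diagonal, Matrix.diagonal_mul]

lemma col_identity (n : ℕ) (W : Matrix (Fin n) (Fin n) ℝ)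
    (hsym : Wᵀ = W) (hrow : ∀ i, 0 < ∑ j, W i j) (x : Fin n → ℝ) :
    ∑ i, ∑ j, W i j * (x i / Real.sqrt (∑ k, W i k) - x j / Real.sqrt (∑ k, W j k)) ^ 2
    = 2 * ((∑ i, (x i) ^ 2) - ∑ i, ∑ j, normMat n W i j * x i * x j) := by
  have hW' : ∀ i j, W j i = W i j := fun i j => congrFun (congrFun hsym i) j
  set s : Fin n → ℝ := fun i => Real.sqrt (∑ k, W i k) with hs_def
  have hd : ∀ i, (0:ℝ) < ∑ k, W i k := hrow
  have hs : ∀ i, 0 < s i := fun i => Real.sqrt_pos.mpr (hd i)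
  have hsq : ∀ i, s i ^ 2 = ∑ k, W i k := fun i => Real.sq_sqrt (hd i).le
  have expand : ∀ i j, W i j * (x i / s i - x j / s j) ^ 2
      = W i j * (x i / s i) ^ 2 + W i j * (x j / s j) ^ 2
        - 2 * (normMat n W i j * x i * x j) := by
    intro i j
    rw [normMat_apply]
    ring
  calc ∑ i, ∑ j, W i j * (x i / s i - x j / s j) ^ 2
      = ∑ i, ∑ j, (W i j * (x i / s i) ^ 2 + W i j * (x j / s j) ^ 2
          - 2 * (normMat n W i j * x i * x j)) := by
        exact Finset.sum_congr rfl fun i _ => Finset.sum_congr rfl fun j _ => expand i j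
    _ = (∑ i, ∑ j, W i j * (x i / s i) ^ 2) + (∑ i, ∑ j, W i j * (x j / s j) ^ 2)
          - 2 * ∑ i, ∑ j, normMat n W i j * x i * x j := by
        simp [Finset.sum_add_distrib, Finset.sum_sub_distrib, Finset.mul_sum]
    _ = (∑ i, (x i) ^ 2) + (∑ i, (x i) ^ 2)
          - 2 * ∑ i, ∑ j, normMat n W i j * x i * x j := by
        congr 1
        congr 1
        · refine Finset.sum_congr rfl fun i _ => ?_
          rw [← Finset.sum_mul, div_pow, ← hsq i]
          rw [mul_div_cancel₀ _ (pow_ne_zero 2 (hs i).ne')]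
        · rw [Finset.sum_comm]
          refine Finset.sum_congr rfl fun j _ => ?_
          have : ∑ i, W i j = ∑ k, W j k := by
            refine Finset.sum_congr rfl fun i _ => hW' j i
          rw [← Finset.sum_mul, this, div_pow, ← hsq j]
          rw [mul_div_cancel₀ _ (pow_ne_zero 2 (hs j).ne')]
    _ = 2 * ((∑ i, (x i) ^ 2) - ∑ i, ∑ j, normMat n W i j * x i * x j) := by ring

/-- bilinear form `tr(Fᵀ((1+μ)I - S)G)` written as explicit sums. -/
noncomputable def Bil (n : ℕ) (μ : ℝ) (S F G : Matrix (Fin n) (Fin n) ℝ) : ℝ :=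
  ∑ i, ∑ l, F i l * ((1 + μ) * G i l - ∑ j, S i j * G j l)

lemma Bil_eq (n : ℕ) (μ : ℝ) (S F G : Matrix (Fin n) (Fin n) ℝ) :
    Bil n μ S F G = (1 + μ) * (∑ i, ∑ l, F i l * G i l)
      - ∑ i, ∑ l, ∑ j, S i j * F i l * G j l := by
  unfold Bil
  rw [Finset.mul_sum, ← Finset.sum_sub_distrib]
  refine Finset.sum_congr rfl fun i _ => ?_
  rw [Finset.mul_sum, ← Finset.sum_sub_distrib]
  refine Finset.sum_congr rfl fun l _ => ?_
  rw [mul_sub, Finset.mul_sum]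
  congr 1
  · ring
  · exact Finset.sum_congr rfl fun j _ => by ring

lemma Bil_symm (n : ℕ) (μ : ℝ) (S F G : Matrix (Fin n) (Fin n) ℝ)
    (hS : ∀ i j, S i j = S j i) : Bil n μ S F G = Bil n μ S G F := by
  rw [Bil_eq, Bil_eq]
  congr 1
  · congr 1
    exact Finset.sum_congr rfl fun i _ => Finset.sum_congr rfl fun l _ => by ring
  · calc ∑ i, ∑ l, ∑ j, S i j * F i l * G j l
        = ∑ l, ∑ i, ∑ j, S i j * F i l * G j l := Finset.sum_comm
      _ = ∑ l, ∑ j, ∑ i, S i j * F i l * G j l :=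
          Finset.sum_congr rfl fun l _ => Finset.sum_comm
      _ = ∑ j, ∑ l, ∑ i, S i j * F i l * G j l := Finset.sum_comm
      _ = ∑ i, ∑ l, ∑ j, S i j * G i l * F j l := by
          refine Finset.sum_congr rfl fun i _ => Finset.sum_congr rfl fun l _ =>
            Finset.sum_congr rfl fun j _ => ?_
          rw [hS j i]; ring

lemma Bil_add_left (n : ℕ) (μ : ℝ) (S X Y G : Matrix (Fin n) (Fin n) ℝ) :
    Bil n μ S (X + Y) G = Bil n μ S X G + Bil n μ S Y G := by
  unfold Bil
  rw [← Finset.sum_add_distrib]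
  refine Finset.sum_congr rfl fun i _ => ?_
  rw [← Finset.sum_add_distrib]
  exact Finset.sum_congr rfl fun l _ => by simp [Matrix.add_apply]; ring

/-- quadratic bound `xᵀ S x ≤ xᵀ x` -/
lemma quad_le (n : ℕ) (W : Matrix (Fin n) (Fin n) ℝ) (hsym : Wᵀ = W)
    (hW : ∀ i j, 0 ≤ W i j) (hrow : ∀ i, 0 < ∑ j, W i j) (x : Fin n → ℝ) :
    ∑ i, ∑ j, normMat n W i j * x i * x j ≤ ∑ i, x i * x i := by
  have h := col_identity n W hsym hrow x
  have h0 : (0:ℝ) ≤ ∑ i, ∑ j, W i j *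
      (x i / Real.sqrt (∑ k, W i k) - x j / Real.sqrt (∑ k, W j k)) ^ 2 :=
    Finset.sum_nonneg fun i _ => Finset.sum_nonneg fun j _ =>
      mul_nonneg (hW i j) (sq_nonneg _)
  have hx : ∑ i, x i * x i = ∑ i, (x i) ^ 2 :=
    Finset.sum_congr rfl fun i _ => (sq (x i)).symm ▸ by ring
  rw [hx]
  linarith

lemma quad_le_mat (n : ℕ) (W : Matrix (Fin n) (Fin n) ℝ) (hsym : Wᵀ = W)
    (hW : ∀ i j, 0 ≤ W i j) (hrow : ∀ i, 0 < ∑ j, W i j)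
    (G : Matrix (Fin n) (Fin n) ℝ) :
    ∑ i, ∑ l, ∑ j, normMat n W i j * G i l * G j l ≤ ∑ i, ∑ l, G i l * G i l := by
  calc ∑ i, ∑ l, ∑ j, normMat n W i j * G i l * G j l
      = ∑ l, ∑ i, ∑ j, normMat n W i j * G i l * G j l := Finset.sum_comm
    _ ≤ ∑ l, ∑ i, G i l * G i l :=
        Finset.sum_le_sum fun l _ => quad_le n W hsym hW hrow (fun i => G i l)
    _ = ∑ i, ∑ l, G i l * G i l := Finset.sum_comm

lemma obj_eq (n : ℕ) (W : Matrix (Fin n) (Fin n) ℝ) (hsym : Wᵀ = W)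
    (hrow : ∀ i, 0 < ∑ j, W i j) (μ : ℝ) (F : Matrix (Fin n) (Fin n) ℝ) :
    basicObj n W μ F = Bil n μ (normMat n W) F F - 2 * μ * (∑ i, F i i) + μ * n := by
  have hterm1 : (1 / 2 : ℝ) * ∑ i, ∑ j, W i j *
      ∑ l, (F i l / Real.sqrt (∑ j', W i j') - F j l / Real.sqrt (∑ j', W j j')) ^ 2
      = (∑ i, ∑ l, F i l * F i l)
        - ∑ i, ∑ l, ∑ j, normMat n W i j * F i l * F j l := by
    have h1 : ∑ i, ∑ j, W i j *
        ∑ l, (F i l / Real.sqrt (∑ j', W i j') - F j l / Real.sqrt (∑ j', W j j')) ^ 2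
        = ∑ l, ∑ i, ∑ j, W i j *
          (F i l / Real.sqrt (∑ j', W i j') - F j l / Real.sqrt (∑ j', W j j')) ^ 2 := by
      calc ∑ i, ∑ j, W i j *
          ∑ l, (F i l / Real.sqrt (∑ j', W i j') - F j l / Real.sqrt (∑ j', W j j')) ^ 2
          = ∑ i, ∑ j, ∑ l, W i j *
            (F i l / Real.sqrt (∑ j', W i j') - F j l / Real.sqrt (∑ j', W j j')) ^ 2 :=
            Finset.sum_congr rfl fun i _ => Finset.sum_congr rfl fun j _ => Finset.mul_sum _ _ _
        _ = ∑ i, ∑ l, ∑ j, W i j *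
            (F i l / Real.sqrt (∑ j', W i j') - F j l / Real.sqrt (∑ j', W j j')) ^ 2 :=
            Finset.sum_congr rfl fun i _ => Finset.sum_comm
        _ = ∑ l, ∑ i, ∑ j, W i j *
            (F i l / Real.sqrt (∑ j', W i j') - F j l / Real.sqrt (∑ j', W j j')) ^ 2 :=
            Finset.sum_comm
    rw [h1]
    have h2 : ∀ l, ∑ i, ∑ j, W i j *
        (F i l / Real.sqrt (∑ j', W i j') - F j l / Real.sqrt (∑ j', W j j')) ^ 2
        = 2 * ((∑ i, (F i l) ^ 2) - ∑ i, ∑ j, normMat n W i j * F i l * F j l) :=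
      fun l => col_identity n W hsym hrow (fun i => F i l)
    rw [Finset.sum_congr rfl fun l _ => h2 l]
    calc (1 / 2 : ℝ) * ∑ l, (2 * ((∑ i, (F i l) ^ 2)
            - ∑ i, ∑ j, normMat n W i j * F i l * F j l))
        = ∑ l, ((∑ i, (F i l) ^ 2) - ∑ i, ∑ j, normMat n W i j * F i l * F j l) := by
          rw [Finset.mul_sum]
          exact Finset.sum_congr rfl fun l _ => by ring
      _ = (∑ l, ∑ i, (F i l) ^ 2) - ∑ l, ∑ i, ∑ j, normMat n W i j * F i l * F j l :=
          Finset.sum_sub_distrib _ _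
      _ = (∑ i, ∑ l, F i l * F i l)
            - ∑ i, ∑ l, ∑ j, normMat n W i j * F i l * F j l := by
          congr 1
          · rw [Finset.sum_comm]
            exact Finset.sum_congr rfl fun i _ => Finset.sum_congr rfl fun l _ => by ring
          · exact Finset.sum_comm
  have hterm2 : ∑ i, ∑ j, (F i j - (1 : Matrix (Fin n) (Fin n) ℝ) i j) ^ 2
      = (∑ i, ∑ j, F i j * F i j) - 2 * (∑ i, F i i) + n := by
    have hrowi : ∀ i, ∑ j, (F i j - (1 : Matrix (Fin n) (Fin n) ℝ) i j) ^ 2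
        = (∑ j, F i j * F i j) - 2 * F i i + 1 := by
      intro i
      have expand : ∀ j, (F i j - (1 : Matrix (Fin n) (Fin n) ℝ) i j) ^ 2
          = F i j * F i j - 2 * (F i j * (1 : Matrix (Fin n) (Fin n) ℝ) i j)
            + (1 : Matrix (Fin n) (Fin n) ℝ) i j * (1 : Matrix (Fin n) (Fin n) ℝ) i j :=
        fun j => by ring
      rw [Finset.sum_congr rfl fun j _ => expand j, Finset.sum_add_distrib,
        Finset.sum_sub_distrib]
      have hb : ∑ j, 2 * (F i j * (1 : Matrix (Fin n) (Fin n) ℝ) i j) = 2 * F i i := by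
        rw [← Finset.mul_sum]
        congr 1
        simp [Matrix.one_apply, mul_ite]
      have hc : ∑ j, (1 : Matrix (Fin n) (Fin n) ℝ) i j * (1 : Matrix (Fin n) (Fin n) ℝ) i j
          = 1 := by
        simp [Matrix.one_apply, ite_and]
      rw [hb, hc]
    rw [Finset.sum_congr rfl fun i _ => hrowi i, Finset.sum_add_distrib,
      Finset.sum_sub_distrib, ← Finset.mul_sum]
    simp [Finset.card_univ]
  unfold basicObj
  rw [hterm1, hterm2, Bil_eq]
  ring

/-- For `W` symmetric with nonnegative entries and positive row sums, `μ > 0` and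
`α = 1/(1+μ)`, the matrix `I - αS` is invertible and `F* = (1-α)(I - αS)⁻¹` is the
unique global minimizer of the basic diffusion objective. -/
theorem basic_diffusion_unique_minimizer (n : ℕ) (W : Matrix (Fin n) (Fin n) ℝ)
    (hsym : Wᵀ = W) (hW : ∀ i j, 0 ≤ W i j) (hrow : ∀ i, 0 < ∑ j, W i j)
    (μ : ℝ) (hμ : 0 < μ) (α : ℝ) (hα : α = 1 / (1 + μ)) :
    IsUnit ((1 : Matrix (Fin n) (Fin n) ℝ) - α • normMat n W) ∧
    ∀ F : Matrix (Fin n) (Fin n) ℝ,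
      F ≠ (1 - α) • ((1 : Matrix (Fin n) (Fin n) ℝ) - α • normMat n W)⁻¹ →
      basicObj n W μ ((1 - α) • ((1 : Matrix (Fin n) (Fin n) ℝ) - α • normMat n W)⁻¹) <
        basicObj n W μ F := by
  set S : Matrix (Fin n) (Fin n) ℝ := normMat n W with hSdef
  have hμ1 : (0:ℝ) < 1 + μ := by linarith
  have hα0 : 0 < α := by rw [hα]; positivity
  have hα1 : α < 1 := by
    rw [hα, div_lt_one hμ1]; linarith
  have hαμ : α * (1 + μ) = 1 := by
    rw [hα]; field_simp
  have hST : Sᵀ = S := by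
    rw [hSdef]
    unfold normMat
    rw [Matrix.transpose_mul, Matrix.transpose_mul, Matrix.diagonal_transpose, hsym,
      Matrix.mul_assoc]
  have hSsym : ∀ i j, S i j = S j i := fun i j => congrFun (congrFun hST j) i
  -- positive definiteness of A = 1 - α • S
  set A : Matrix (Fin n) (Fin n) ℝ := 1 - α • S with hAdef
  have hxx : ∀ x : Fin n → ℝ, x ≠ 0 → 0 < ∑ i, x i * x i := by
    intro x hx
    obtain ⟨i, hi⟩ := Function.ne_iff.mp hx
    refine Finset.sum_pos' (fun j _ => mul_self_nonneg _)
      ⟨i, Finset.mem_univ i, mul_self_pos.mpr (by simpa using hi)⟩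
  have hPD : A.PosDef := by
    refine Matrix.PosDef.of_dotProduct_mulVec_pos ?_ ?_
    · rw [Matrix.IsHermitian, Matrix.conjTranspose_eq_transpose_of_trivial,
        Matrix.transpose_sub, Matrix.transpose_one, Matrix.transpose_smul, hST]
    · intro x hx
      have hmv : A *ᵥ x = x - α • (S *ᵥ x) := by
        rw [hAdef, Matrix.sub_mulVec, Matrix.one_mulVec, Matrix.smul_mulVec]
      have hdot : dotProduct (star x) (A *ᵥ x)
          = (∑ i, x i * x i) - α * ∑ i, ∑ j, S i j * x i * x j := by
        have key : ∀ i, x i * (α * ∑ j, S i j * x j) = α * ∑ j, S i j * x i * x j := by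
          intro i
          rw [Finset.mul_sum, Finset.mul_sum, Finset.mul_sum]
          exact Finset.sum_congr rfl fun j _ => by ring
        rw [hmv]
        simp only [star_trivial, dotProduct, Pi.sub_apply, Pi.smul_apply, smul_eq_mul,
          Matrix.mulVec, dotProduct]
        rw [Finset.mul_sum, ← Finset.sum_sub_distrib]
        refine Finset.sum_congr rfl fun i _ => ?_
        rw [mul_sub, key i, Finset.mul_sum]
      rw [hdot]
      have hq := quad_le n W hsym hW hrow x
      have hp := hxx x hx
      nlinarith [hq, hp, hα0.le, hα1]
  have hUnit : IsUnit A := hPD.isUnit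
  refine ⟨hUnit, ?_⟩
  -- the minimizer
  set Fs : Matrix (Fin n) (Fin n) ℝ := (1 - α) • A⁻¹ with hFsdef
  have hdet : IsUnit A.det := (Matrix.isUnit_iff_isUnit_det A).mp hUnit
  have hAinv : A * A⁻¹ = 1 := Matrix.mul_nonsing_inv A hdet
  have hMA : (1 + μ) • A = (1 + μ) • (1 : Matrix (Fin n) (Fin n) ℝ) - S := by
    rw [hAdef, smul_sub, smul_smul]
    congr 1
    rw [mul_comm, hαμ, one_smul]
  have hMFs : ((1 + μ) • (1 : Matrix (Fin n) (Fin n) ℝ) - S) * Fs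
      = μ • (1 : Matrix (Fin n) (Fin n) ℝ) := by
    rw [← hMA, hFsdef, Matrix.smul_mul, mul_smul_comm, hAinv, smul_smul]
    congr 1
    linear_combination -hαμ
  have hMFs' : ∀ i l, (1 + μ) * Fs i l - ∑ j, S i j * Fs j l
      = μ * (1 : Matrix (Fin n) (Fin n) ℝ) i l := by
    intro i l
    have h := congrFun (congrFun hMFs i) l
    rw [Matrix.sub_mul, Matrix.smul_mul, Matrix.one_mul] at h
    simpa [Matrix.sub_apply, Matrix.smul_apply, Matrix.mul_apply] using h
  have hBFs : ∀ G : Matrix (Fin n) (Fin n) ℝ, Bil n μ S G Fs = μ * ∑ i, G i i := by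
    intro G
    unfold Bil
    calc ∑ i, ∑ l, G i l * ((1 + μ) * Fs i l - ∑ j, S i j * Fs j l)
        = ∑ i, ∑ l, G i l * (μ * (1 : Matrix (Fin n) (Fin n) ℝ) i l) :=
          Finset.sum_congr rfl fun i _ => Finset.sum_congr rfl fun l _ => by rw [hMFs']
      _ = μ * ∑ i, G i i := by
          rw [Finset.mul_sum]
          refine Finset.sum_congr rfl fun i _ => ?_
          simp [Matrix.one_apply, mul_ite, mul_comm]
  -- main inequality
  intro F hF
  set G : Matrix (Fin n) (Fin n) ℝ := F - Fs with hGdef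
  have hGne : G ≠ 0 := sub_ne_zero.mpr hF
  have hFeq : F = Fs + G := by rw [hGdef]; abel
  have hBright : ∀ X Y Z : Matrix (Fin n) (Fin n) ℝ,
      Bil n μ S X (Y + Z) = Bil n μ S X Y + Bil n μ S X Z := by
    intro X Y Z
    rw [Bil_symm n μ S X _ hSsym, Bil_add_left, Bil_symm n μ S Y X hSsym,
      Bil_symm n μ S Z X hSsym]
  have hBexp : Bil n μ S F F = Bil n μ S Fs Fs + 2 * (μ * ∑ i, G i i) + Bil n μ S G G := by
    rw [hFeq, hBright, Bil_add_left, Bil_add_left, hBFs G,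
      Bil_symm n μ S Fs G hSsym, hBFs G]
    ring
  have htr : (∑ i, F i i) = (∑ i, Fs i i) + ∑ i, G i i := by
    rw [hFeq, ← Finset.sum_add_distrib]
    exact Finset.sum_congr rfl fun i _ => rfl
  have hGpos : 0 < ∑ i, ∑ l, G i l * G i l := by
    have : ∃ i l, G i l ≠ 0 := by
      by_contra h
      push_neg at h
      exact hGne (Matrix.ext fun i l => h i l)
    obtain ⟨i, l, hil⟩ := this
    refine Finset.sum_pos' (fun i _ => Finset.sum_nonneg fun l _ => mul_self_nonneg _)
      ⟨i, Finset.mem_univ i, ?_⟩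
    refine Finset.sum_pos' (fun l _ => mul_self_nonneg _)
      ⟨l, Finset.mem_univ l, mul_self_pos.mpr hil⟩
  have hBGG : μ * (∑ i, ∑ l, G i l * G i l) ≤ Bil n μ S G G := by
    rw [Bil_eq]
    have h := quad_le_mat n W hsym hW hrow G
    nlinarith [h]
  rw [obj_eq n W hsym hrow μ F, obj_eq n W hsym hrow μ Fs, hBexp, htr]
  have : 0 < Bil n μ S G G := lt_of_lt_of_le (by positivity) hBGG
  linarith
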